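/- arXiv:2502.02875 — 3 statements merged into one kernel-verified Lean document; each statement's English description precedes it below -/
import Mathlib

section
/- Let n ≥ 1 agents each have a finite nonempty action set U_i, let Q_i : U_i → ℝ be per-agent utility functions, and let ū be a joint action such that ū_i maximizes Q_i for every agent i. Let g₁, g₂ : ℝⁿ → ℝ be mixing functions that are monotone nondecreasing in each coordinate, let Q_r be a function on joint actions with Q_r(u) ≤ 0 for all u, let w_r be a function on joint actions with w_r(u) ∈ {0,1} for all u and w_r(ū) = 0, and let λ ∈ [0,1]. Define the composite value Q_jt(u) = λ·(g₁(Q₁(u₁),…,Qₙ(uₙ)) + w_r(u)·Q_r(u)) + (1−λ)·g₂(Q₁(u₁),…,Qₙ(uₙ)). Then Q_jt(ū) ≥ Q_jt(u) for every joint action u; that is, the joint action assembled from the per-agent greedy actions maximizes the composite joint action-value function, so the per-agent utilities [Q_i] satisfy the IGM criterion for Q_jt. -/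
/-- Proposition 1 (HPF): the composite joint action-value function
`Q_jt(u) = λ·(g₁(Q₁(u₁),…,Qₙ(uₙ)) + w_r(u)·Q_r(u)) + (1−λ)·g₂(Q₁(u₁),…,Qₙ(uₙ))`
is maximized by the joint action assembled from per-agent greedy actions,
i.e. the per-agent utilities satisfy the IGM criterion for `Q_jt`. -/
theorem hpf_composite_IGM {n : ℕ} (hn : 1 ≤ n)
    (U : Fin n → Type*) [∀ i, Fintype (U i)] [∀ i, Nonempty (U i)]
    (Q : ∀ i, U i → ℝ) (ubar : ∀ i, U i)
    (hubar : ∀ i, ∀ u : U i, Q i u ≤ Q i (ubar i))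
    (g₁ g₂ : (Fin n → ℝ) → ℝ)
    (hg₁ : ∀ x y : Fin n → ℝ, (∀ i, x i ≤ y i) → g₁ x ≤ g₁ y)
    (hg₂ : ∀ x y : Fin n → ℝ, (∀ i, x i ≤ y i) → g₂ x ≤ g₂ y)
    (Qr : (∀ i, U i) → ℝ) (hQr : ∀ u, Qr u ≤ 0)
    (wr : (∀ i, U i) → ℝ) (hwr : ∀ u, wr u = 0 ∨ wr u = 1)
    (hwrbar : wr ubar = 0)
    (lam : ℝ) (hlam0 : 0 ≤ lam) (hlam1 : lam ≤ 1)
    (Qjt : (∀ i, U i) → ℝ)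
    (hQjt : ∀ u : ∀ i, U i,
      Qjt u = lam * (g₁ (fun i => Q i (u i)) + wr u * Qr u)
        + (1 - lam) * g₂ (fun i => Q i (u i))) :
    ∀ u : ∀ i, U i, Qjt u ≤ Qjt ubar := by
  intro u
  rw [hQjt u, hQjt ubar, hwrbar]
  have h1 : g₁ (fun i => Q i (u i)) ≤ g₁ (fun i => Q i (ubar i)) :=
    hg₁ _ _ fun i => hubar i (u i)
  have h2 : g₂ (fun i => Q i (u i)) ≤ g₂ (fun i => Q i (ubar i)) :=
    hg₂ _ _ fun i => hubar i (u i)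
  have hw : wr u * Qr u ≤ 0 := by
    rcases hwr u with h | h
    · simp [h]
    · simp [h]; exact hQr u
  have := hQr u
  nlinarith [h1, h2, hw]
end

section
/- Let n ≥ 1 agents each have a finite nonempty action set U_i, let Q_i : U_i → ℝ be per-agent utility functions with ū a joint action such that ū_i maximizes Q_i for every i, and let g : ℝⁿ → ℝ be monotone nondecreasing in each coordinate. Let Q_r be a function on joint actions with Q_r(u) ≤ 0 for all u, and let w_r be a function on joint actions with w_r(u) ∈ {0,1} for all u and w_r(ū) = 0. Define Q_jt(u) = g(Q₁(u₁),…,Qₙ(uₙ)) + w_r(u)·Q_r(u). Then ū maximizes Q_jt over all joint actions, and Q_jt(ū) = g(Q₁(ū₁),…,Qₙ(ūₙ)); in particular the maximum of Q_jt equals the value of the factored main term at ū. -/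
/-- Surrogate-target (ResQ/WQMIX-style) decomposition: with a monotone mixing
`g`, residual `Q_r ≤ 0` and 0/1 mask `w_r` vanishing at the greedy joint
action `ū`, the value `Q_jt(u) = g(Q₁(u₁),…,Qₙ(uₙ)) + w_r(u)·Q_r(u)` is
maximized at `ū`, and its maximum equals the factored main term at `ū`. -/
theorem surrogate_target_IGM {n : ℕ} (hn : 1 ≤ n)
    (U : Fin n → Type*) [∀ i, Fintype (U i)] [∀ i, Nonempty (U i)]
    (Q : ∀ i, U i → ℝ) (ubar : ∀ i, U i)
    (hubar : ∀ i, ∀ u : U i, Q i u ≤ Q i (ubar i))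
    (g : (Fin n → ℝ) → ℝ)
    (hg : ∀ x y : Fin n → ℝ, (∀ i, x i ≤ y i) → g x ≤ g y)
    (Qr : (∀ i, U i) → ℝ) (hQr : ∀ u, Qr u ≤ 0)
    (wr : (∀ i, U i) → ℝ) (hwr : ∀ u, wr u = 0 ∨ wr u = 1)
    (hwrbar : wr ubar = 0)
    (Qjt : (∀ i, U i) → ℝ)
    (hQjt : ∀ u : ∀ i, U i,
      Qjt u = g (fun i => Q i (u i)) + wr u * Qr u) :
    (∀ u : ∀ i, U i, Qjt u ≤ Qjt ubar) ∧
      Qjt ubar = g (fun i => Q i (ubar i)) := by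
  have hbar : Qjt ubar = g (fun i => Q i (ubar i)) := by
    rw [hQjt, hwrbar]; ring
  refine ⟨fun u => ?_, hbar⟩
  rw [hQjt, hbar]
  have h1 : g (fun i => Q i (u i)) ≤ g (fun i => Q i (ubar i)) :=
    hg _ _ fun i => hubar i (u i)
  have h2 : wr u * Qr u ≤ 0 := by
    rcases hwr u with h | h <;> simp [h, hQr u]
  linarith
end

section
/- Under the hypotheses of Proposition 1 — n agents with finite nonempty action sets U_i, per-agent utilities Q_i : U_i → ℝ with ū a joint action whose components maximize the respective Q_i, mixing functions g₁, g₂ : ℝⁿ → ℝ monotone nondecreasing in each coordinate, residual Q_r ≤ 0, mask w_r ∈ {0,1} with w_r(ū) = 0, λ ∈ [0,1], and Q_jt(u) = λ·(g₁(Q₁(u₁),…,Qₙ(uₙ)) + w_r(u)·Q_r(u)) + (1−λ)·g₂(Q₁(u₁),…,Qₙ(uₙ)) — the maximum of Q_jt over all joint actions equals λ·g₁(Q₁(ū₁),…,Qₙ(ūₙ)) + (1−λ)·g₂(Q₁(ū₁),…,Qₙ(ūₙ)). -/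
/-- Corollary of Proposition 1: the maximum of the HPF composite joint
action-value function `Q_jt` over all joint actions equals
`λ·g₁(Q₁(ū₁),…,Qₙ(ūₙ)) + (1−λ)·g₂(Q₁(ū₁),…,Qₙ(ūₙ))`. -/
theorem hpf_composite_max_value {n : ℕ} (hn : 1 ≤ n)
    (U : Fin n → Type*) [∀ i, Fintype (U i)] [∀ i, Nonempty (U i)]
    (Q : ∀ i, U i → ℝ) (ubar : ∀ i, U i)
    (hubar : ∀ i, ∀ u : U i, Q i u ≤ Q i (ubar i))
    (g₁ g₂ : (Fin n → ℝ) → ℝ)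
    (hg₁ : ∀ x y : Fin n → ℝ, (∀ i, x i ≤ y i) → g₁ x ≤ g₁ y)
    (hg₂ : ∀ x y : Fin n → ℝ, (∀ i, x i ≤ y i) → g₂ x ≤ g₂ y)
    (Qr : (∀ i, U i) → ℝ) (hQr : ∀ u, Qr u ≤ 0)
    (wr : (∀ i, U i) → ℝ) (hwr : ∀ u, wr u = 0 ∨ wr u = 1)
    (hwrbar : wr ubar = 0)
    (lam : ℝ) (hlam0 : 0 ≤ lam) (hlam1 : lam ≤ 1)
    (Qjt : (∀ i, U i) → ℝ)
    (hQjt : ∀ u : ∀ i, U i,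
      Qjt u = lam * (g₁ (fun i => Q i (u i)) + wr u * Qr u)
        + (1 - lam) * g₂ (fun i => Q i (u i))) :
    IsGreatest (Set.range Qjt)
      (lam * g₁ (fun i => Q i (ubar i))
        + (1 - lam) * g₂ (fun i => Q i (ubar i))) := by
  constructor
  · exact ⟨ubar, by rw [hQjt]; rw [hwrbar]; ring⟩
  · rintro x ⟨u, rfl⟩
    rw [hQjt]
    have h1 : wr u * Qr u ≤ 0 := by
      rcases hwr u with h | h <;> simp [h]
      exact hQr u
    have h2 : g₁ (fun i => Q i (u i)) ≤ g₁ (fun i => Q i (ubar i)) :=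
      hg₁ _ _ fun i => hubar i (u i)
    have h3 : g₂ (fun i => Q i (u i)) ≤ g₂ (fun i => Q i (ubar i)) :=
      hg₂ _ _ fun i => hubar i (u i)
    have := add_le_add h2 h1
    nlinarith
end
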